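/- arXiv:gr-qc/0511087 — 2 statements merged into one kernel-verified Lean document; each statement's English description precedes it below -/
import Mathlib

section
/- For every φ ∈ 𝓑 the real-valued function i_φ(t) = M(u₀ + tφ) is twice continuously differentiable in t on ℝ (indeed, its third derivative exists for all t). -/
open Real MeasureTheory

noncomputable section

/-- Partial derivative with respect to ρ (the first coordinate) of an
axisymmetric function, viewed as a function of (ρ, z). -/
def pdR (f : ℝ × ℝ → ℝ) (p : ℝ × ℝ) : ℝ := fderiv ℝ f p (1, 0)

/-- Partial derivative with respect to z (the second coordinate). -/
def pdZ (f : ℝ × ℝ → ℝ) (p : ℝ × ℝ) : ℝ := fderiv ℝ f p (0, 1)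

/-- |∂f|² = f_{,ρ}² + f_{,z}². -/
def gradSq (f : ℝ × ℝ → ℝ) (p : ℝ × ℝ) : ℝ := (pdR f p) ^ 2 + (pdZ f p) ^ 2

/-- ∂f·∂g = f_{,ρ} g_{,ρ} + f_{,z} g_{,z}. -/
def gradDot (f g : ℝ × ℝ → ℝ) (p : ℝ × ℝ) : ℝ :=
  pdR f p * pdR g p + pdZ f p * pdZ g p

/-- The flat Laplacian of ℝ³ acting on axisymmetric functions:
Δf = f_{,ρρ} + ρ⁻¹ f_{,ρ} + f_{,zz}. -/
def lap (f : ℝ × ℝ → ℝ) (p : ℝ × ℝ) : ℝ :=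
  pdR (pdR f) p + (p.1)⁻¹ * pdR f p + pdZ (pdZ f) p

/-- The flat divergence of ℝ³ of an axisymmetric vector field (Wρ, Wz):
div W = ρ⁻¹ (ρ Wρ)_{,ρ} + Wz_{,z} = Wρ_{,ρ} + ρ⁻¹ Wρ + Wz_{,z}. -/
def divg (Wr Wz : ℝ × ℝ → ℝ) (p : ℝ × ℝ) : ℝ :=
  pdR Wr p + (p.1)⁻¹ * Wr p + pdZ Wz p

/-- The half-plane {ρ > 0} of (ρ, z), representing ℝ³ in cylindrical coordinates. -/
def HP : Set (ℝ × ℝ) := {p | 0 < p.1}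

/-- Ω_{ρ₀} = {ρ > ρ₀}, the exterior of the solid cylinder of radius ρ₀. -/
def Om (ρ₀ : ℝ) : Set (ℝ × ℝ) := {p | ρ₀ < p.1}

/-- ∫_{ℝ³} h dμ for an axisymmetric integrand h, where dμ = ρ dρ dz dφ. -/
def intR3 (h : ℝ × ℝ → ℝ) : ℝ := (2 * π) * ∫ p in HP, h p * p.1

/-- ∫_{Ω_{ρ₀}} h dμ for an axisymmetric integrand h. -/
def intOm (ρ₀ : ℝ) (h : ℝ × ℝ → ℝ) : ℝ := (2 * π) * ∫ p in Om ρ₀, h p * p.1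

/-- The mass functional M(v, Y) = (1/(32π)) ∫_{ℝ³} (|∂v|² + ρ⁻⁴ e^{−2v} |∂Y|²) dμ. -/
def MF (v Y : ℝ × ℝ → ℝ) : ℝ :=
  (1 / (32 * π)) *
    intR3 (fun p => gradSq v p + (p.1 ^ 4)⁻¹ * Real.exp (-2 * v p) * gradSq Y p)

/-- r = √(ρ² + z²). -/
def rr (p : ℝ × ℝ) : ℝ := Real.sqrt (p.1 ^ 2 + p.2 ^ 2)

/-- cos θ = z / r. -/
def cosT (p : ℝ × ℝ) : ℝ := p.2 / rr p

/-- sin²θ = ρ² / r². -/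
def sin2T (p : ℝ × ℝ) : ℝ := p.1 ^ 2 / (rr p) ^ 2

/-- r̃ = r + √|J|. -/
def rt (J : ℝ) (p : ℝ × ℝ) : ℝ := rr p + Real.sqrt |J|

/-- Σ = r̃² + |J| cos²θ. -/
def Sg (J : ℝ) (p : ℝ × ℝ) : ℝ := (rt J p) ^ 2 + |J| * (cosT p) ^ 2

/-- The extreme Kerr potential Y₀. -/
def Y0 (J : ℝ) (p : ℝ × ℝ) : ℝ :=
  2 * J * ((cosT p) ^ 3 - 3 * cosT p) - 2 * J ^ 2 * cosT p * (sin2T p) ^ 2 / Sg J p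

/-- The extreme Kerr Killing norm X₀. -/
def X0 (J : ℝ) (p : ℝ × ℝ) : ℝ :=
  (((rt J p) ^ 2 + |J|) ^ 2 - (rr p) ^ 2 * |J| * sin2T p) * sin2T p / Sg J p

/-- The extreme Kerr function v₀ = ln X₀ − 2 ln ρ, so that X₀ = ρ² e^{v₀}. -/
def v0 (J : ℝ) (p : ℝ × ℝ) : ℝ := Real.log (X0 J p) - 2 * Real.log p.1

/-- σ = √(r² + 1). -/
def sgm (p : ℝ × ℝ) : ℝ := Real.sqrt ((rr p) ^ 2 + 1)

/-- The pointwise weighted C¹ quantity σ^{−β}|f| + σ^{−β+1}|∂f|. -/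
def wFn (β : ℝ) (f : ℝ × ℝ → ℝ) (p : ℝ × ℝ) : ℝ :=
  sgm p ^ (-β) * |f p| + sgm p ^ (-β + 1) * Real.sqrt (gradSq f p)

/-- The weighted norm ‖f‖_{C¹_β(Ω)} = sup_Ω (σ^{−β}|f| + σ^{−β+1}|∂f|). -/
def C1norm (β : ℝ) (Ω : Set (ℝ × ℝ)) (f : ℝ × ℝ → ℝ) : ℝ :=
  sSup (wFn β f '' Ω)

/-- The Banach space 𝓑: pairs φ = (α, y) of axisymmetric C¹ functions with
y ≡ 0 on {ρ ≤ ρ₀} and finite norm ‖φ‖_𝓑 = ‖α‖_{C¹_β(ℝ³)} + ‖y‖_{C¹_β(Ω_{ρ₀})}. -/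
structure Bsp (ρ₀ β : ℝ) where
  a : ℝ × ℝ → ℝ
  y : ℝ × ℝ → ℝ
  ha : ContDiff ℝ 1 a
  hy : ContDiff ℝ 1 y
  hy0 : ∀ p : ℝ × ℝ, p.1 ≤ ρ₀ → y p = 0
  hba : BddAbove (wFn β a '' HP)
  hby : BddAbove (wFn β y '' Om ρ₀)

/-- The norm of 𝓑. -/
def Bnorm (ρ₀ β : ℝ) (φ : Bsp ρ₀ β) : ℝ :=
  C1norm β HP φ.a + C1norm β (Om ρ₀) φ.y

/-- i_φ(t) = M(u₀ + tφ) = M(v₀ + tα, Y₀ + ty). -/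
def iF (J ρ₀ β : ℝ) (φ : Bsp ρ₀ β) (t : ℝ) : ℝ :=
  MF (fun p => v0 J p + t * φ.a p) (fun p => Y0 J p + t * φ.y p)

/-- ‖α‖²_{H₁} = ∫_{ℝ³} |∂α|² dμ + ∫_{ℝ³} α² r⁻² dμ. -/
def H1sq (a : ℝ × ℝ → ℝ) : ℝ :=
  intR3 (fun p => gradSq a p) + intR3 (fun p => (a p) ^ 2 * ((rr p) ^ 2)⁻¹)

/-- ‖y‖²_{H₂} = ∫_{Ω_{ρ₀}} |∂y|² ρ⁻⁴ dμ + ∫_{Ω_{ρ₀}} y² ρ⁻⁶ dμ. -/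
def H2sq (ρ₀ : ℝ) (y : ℝ × ℝ → ℝ) : ℝ :=
  intOm ρ₀ (fun p => gradSq y p * (p.1 ^ 4)⁻¹) +
    intOm ρ₀ (fun p => (y p) ^ 2 * (p.1 ^ 6)⁻¹)

/-- ‖φ‖²_𝓗 = ‖α‖²_{H₁} + ‖y‖²_{H₂}. -/
def Hsq (ρ₀ β : ℝ) (φ : Bsp ρ₀ β) : ℝ := H1sq φ.a + H2sq ρ₀ φ.y

/-!
Expanding the squares, the mass density of `(v₀ + tα, Y₀ + ty)` is
`A + 2tB + t²C + e^{-2tα} (D + 2tE + t²G)`, where `A + 2sB + s²C = ρ |∂(v₀ + sα)|²` and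
`D + 2sE + s²G = ρ⁻³ e^{-2v₀} |∂(Y₀ + sy)|²` are nonnegative for every `s`. Since `β < -1/2`, the
decay of `α` and `y` makes `C` and `G` integrable (here `v₀ ≥ 0`, and `y` vanishes near the axis),
and `α` is bounded. If `A` and `D` are integrable, then so are `B` and `E`, and differentiating under
the integral sign shows that `t ↦ ∫ e^{-2tα} H` is smooth for every integrable `H`. Otherwise the
density is integrable for no `t`, so `i_φ` is identically zero (the Bochner integral of a
non-integrable function is `0`). Either way `i_φ` is smooth.
-/

open scoped ContDiff

section QuadraticExpIntegral

variable {X : Type*} [MeasurableSpace X] {μ : Measure X} {c H : X → ℝ} {M : ℝ}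

lemma exp_mul_le_exp_mul {s T x M : ℝ} (hs : |s| ≤ T) (hx : |x| ≤ M) :
    exp (s * x) ≤ exp (T * M) := by
  refine exp_le_exp.2 ((le_abs_self _).trans ?_)
  rw [abs_mul]
  exact mul_le_mul hs hx (abs_nonneg x) ((abs_nonneg s).trans hs)

lemma integrable_mul_of_abs_le (hc : AEStronglyMeasurable c μ) (hcM : ∀ᵐ x ∂μ, |c x| ≤ M)
    (hH : Integrable H μ) : Integrable (fun x => c x * H x) μ :=
  hH.bdd_mul hc (hcM.mono fun _ hx => by rwa [Real.norm_eq_abs])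

lemma integrable_exp_mul_mul (hc : AEStronglyMeasurable c μ) (hcM : ∀ᵐ x ∂μ, |c x| ≤ M)
    (hH : Integrable H μ) (t : ℝ) : Integrable (fun x => exp (t * c x) * H x) μ :=
  hH.bdd_mul (continuous_exp.comp_aestronglyMeasurable (hc.const_mul t))
    (hcM.mono fun _ hx => by
      rw [norm_of_nonneg (exp_nonneg _)]
      exact exp_mul_le_exp_mul le_rfl hx)

lemma hasDerivAt_integral_exp_mul_mul (hc : AEStronglyMeasurable c μ)
    (hcM : ∀ᵐ x ∂μ, |c x| ≤ M) (hH : Integrable H μ) (t : ℝ) :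
    HasDerivAt (fun s => ∫ x, exp (s * c x) * H x ∂μ)
      (∫ x, exp (t * c x) * (c x * H x) ∂μ) t := by
  have hcH := integrable_mul_of_abs_le hc hcM hH
  refine (hasDerivAt_integral_of_dominated_loc_of_deriv_le (Metric.ball_mem_nhds t one_pos)
    (F' := fun s x => exp (s * c x) * (c x * H x))
    (.of_forall fun s => (integrable_exp_mul_mul hc hcM hH s).aestronglyMeasurable)
    (integrable_exp_mul_mul hc hcM hH t) (integrable_exp_mul_mul hc hcM hcH t).aestronglyMeasurable
    (bound := fun x => exp ((|t| + 1) * M) * ‖c x * H x‖) ?_ (hcH.norm.const_mul _) ?_).2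
  · filter_upwards [hcM] with x hx s hs
    have hst : |s| ≤ |t| + 1 := by
      have := abs_sub_abs_le_abs_sub s t
      rw [Metric.mem_ball, Real.dist_eq] at hs
      linarith
    rw [norm_mul, norm_of_nonneg (exp_nonneg _)]
    exact mul_le_mul_of_nonneg_right (exp_mul_le_exp_mul hst hx) (norm_nonneg _)
  · filter_upwards with x s _
    exact ((hasDerivAt_mul_const (c x)).exp.mul_const (H x)).congr_deriv (mul_assoc _ _ _)

theorem contDiff_integral_exp_mul_mul (hc : AEStronglyMeasurable c μ)
    (hcM : ∀ᵐ x ∂μ, |c x| ≤ M) (hH : Integrable H μ) :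
    ContDiff ℝ ∞ fun t => ∫ x, exp (t * c x) * H x ∂μ := by
  rw [contDiff_infty]
  intro n
  induction n generalizing H with
  | zero =>
    exact contDiff_zero.2 <| continuous_iff_continuousAt.2 fun t =>
      (hasDerivAt_integral_exp_mul_mul hc hcM hH t).continuousAt
  | succ n ih =>
    rw [Nat.cast_succ, contDiff_succ_iff_deriv]
    refine ⟨fun t => (hasDerivAt_integral_exp_mul_mul hc hcM hH t).differentiableAt,
      by simp, ?_⟩
    rw [funext fun t => (hasDerivAt_integral_exp_mul_mul hc hcM hH t).deriv]
    exact ih (integrable_mul_of_abs_le hc hcM hH)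

lemma abs_le_of_forall_quadratic_nonneg {a b c : ℝ}
    (h : ∀ s : ℝ, 0 ≤ a + 2 * s * b + s ^ 2 * c) : |b| ≤ (a + c) / 2 :=
  abs_le.2 ⟨by linarith [h 1], by linarith [h (-1)]⟩

variable {A B C : X → ℝ}

lemma integrable_of_forall_quadratic_nonneg (hB : AEStronglyMeasurable B μ)
    (hA : Integrable A μ) (hC : Integrable C μ)
    (hABC : ∀ᵐ x ∂μ, ∀ s : ℝ, 0 ≤ A x + 2 * s * B x + s ^ 2 * C x) : Integrable B μ :=
  ((hA.add hC).div_const 2).mono' hB <| hABC.mono fun _ hx =>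
    (Real.norm_eq_abs _).trans_le (abs_le_of_forall_quadratic_nonneg hx)

/-- `2 (A + 2tB + t²C) + 2t²C - A` is the value of the quadratic at `2t`. -/
lemma integrable_of_integrable_quadratic (hA : AEStronglyMeasurable A μ) (hC : Integrable C μ)
    (hABC : ∀ᵐ x ∂μ, ∀ s : ℝ, 0 ≤ A x + 2 * s * B x + s ^ 2 * C x) {t : ℝ}
    (ht : Integrable (fun x => A x + 2 * t * B x + t ^ 2 * C x) μ) : Integrable A μ :=
  ((ht.const_mul 2).add (hC.const_mul (2 * t ^ 2))).mono' hA <| hABC.mono fun x hx => by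
    rw [Real.norm_of_nonneg (by simpa using hx 0), Pi.add_apply]
    linarith [hx (2 * t)]

variable {D E G : X → ℝ}

lemma contDiff_integral_add_exp_mul_mul {P Q : X → ℝ} (hc : AEStronglyMeasurable c μ)
    (hcM : ∀ᵐ x ∂μ, |c x| ≤ M) (hP : Integrable P μ) (hQ : Integrable Q μ) :
    ContDiff ℝ ∞ fun t => ∫ x, P x + exp (t * c x) * Q x ∂μ := by
  simp_rw [fun t => integral_add hP (integrable_exp_mul_mul hc hcM hQ t)]
  exact contDiff_const.add (contDiff_integral_exp_mul_mul hc hcM hQ)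

/-- Both summands of the integrand are nonnegative, so each is integrable along with it. -/
lemma integrable_of_integrable_quadratic_add_exp_mul_quadratic
    (hc : AEStronglyMeasurable c μ) (hcM : ∀ᵐ x ∂μ, |c x| ≤ M)
    (hA : AEStronglyMeasurable A μ) (hB : AEStronglyMeasurable B μ)
    (hD : AEStronglyMeasurable D μ) (hC : Integrable C μ) (hG : Integrable G μ)
    (hABC : ∀ᵐ x ∂μ, ∀ s : ℝ, 0 ≤ A x + 2 * s * B x + s ^ 2 * C x)
    (hDEG : ∀ᵐ x ∂μ, ∀ s : ℝ, 0 ≤ D x + 2 * s * E x + s ^ 2 * G x) {t : ℝ}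
    (ht : Integrable (fun x => A x + 2 * t * B x + t ^ 2 * C x +
      exp (t * c x) * (D x + 2 * t * E x + t ^ 2 * G x)) μ) :
    Integrable A μ ∧ Integrable D μ := by
  have hP : Integrable (fun x => A x + 2 * t * B x + t ^ 2 * C x) μ :=
    ht.mono' ((hA.add (hB.const_mul _)).add (hC.aestronglyMeasurable.const_mul _)) <|
      (hABC.and hDEG).mono fun x hx => by
        rw [Real.norm_of_nonneg (hx.1 t)]
        linarith [mul_nonneg (exp_nonneg (t * c x)) (hx.2 t)]
  have hexpQ : Integrable (fun x => exp (t * c x) * (D x + 2 * t * E x + t ^ 2 * G x)) μ :=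
    (ht.sub hP).congr (ae_of_all _ fun x => by simp only [Pi.sub_apply]; ring)
  have hQ : Integrable (fun x => D x + 2 * t * E x + t ^ 2 * G x) μ :=
    (integrable_exp_mul_mul hc hcM hexpQ (-t)).congr (ae_of_all _ fun x => by
      simp only [← mul_assoc, ← exp_add, neg_mul, neg_add_cancel, exp_zero, one_mul])
  exact ⟨integrable_of_integrable_quadratic hA hC hABC hP,
    integrable_of_integrable_quadratic hD hG hDEG hQ⟩

theorem contDiff_integral_quadratic_add_exp_mul_quadratic
    (hc : AEStronglyMeasurable c μ) (hcM : ∀ᵐ x ∂μ, |c x| ≤ M)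
    (hA : AEStronglyMeasurable A μ) (hB : AEStronglyMeasurable B μ)
    (hD : AEStronglyMeasurable D μ) (hE : AEStronglyMeasurable E μ)
    (hC : Integrable C μ) (hG : Integrable G μ)
    (hABC : ∀ᵐ x ∂μ, ∀ s : ℝ, 0 ≤ A x + 2 * s * B x + s ^ 2 * C x)
    (hDEG : ∀ᵐ x ∂μ, ∀ s : ℝ, 0 ≤ D x + 2 * s * E x + s ^ 2 * G x) :
    ContDiff ℝ ∞ fun t => ∫ x, A x + 2 * t * B x + t ^ 2 * C x +
      exp (t * c x) * (D x + 2 * t * E x + t ^ 2 * G x) ∂μ := by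
  by_cases h : Integrable A μ ∧ Integrable D μ
  · obtain ⟨hA, hD⟩ := h
    have hB := integrable_of_forall_quadratic_nonneg hB hA hC hABC
    have hE := integrable_of_forall_quadratic_nonneg hE hD hG hDEG
    have hAD := contDiff_integral_add_exp_mul_mul hc hcM hA hD
    have hBE := contDiff_integral_add_exp_mul_mul hc hcM hB hE
    have hCG := contDiff_integral_add_exp_mul_mul hc hcM hC hG
    have hint : ∀ {P Q : X → ℝ} (t : ℝ), Integrable P μ → Integrable Q μ →
        Integrable (fun x => P x + exp (t * c x) * Q x) μ :=
      fun t hP hQ => hP.add (integrable_exp_mul_mul hc hcM hQ t)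
    have hsplit : ∀ t : ℝ, ∫ x, A x + 2 * t * B x + t ^ 2 * C x +
          exp (t * c x) * (D x + 2 * t * E x + t ^ 2 * G x) ∂μ =
        (∫ x, A x + exp (t * c x) * D x ∂μ) +
          2 * t * (∫ x, B x + exp (t * c x) * E x ∂μ) +
          t ^ 2 * ∫ x, C x + exp (t * c x) * G x ∂μ := fun t => by
      rw [← integral_const_mul, ← integral_const_mul, ← integral_add (hint t hA hD)
        ((hint t hB hE).const_mul _), ← integral_add _ ((hint t hC hG).const_mul _)]
      · congr 1 with x
        ring
      · exact (hint t hA hD).add ((hint t hB hE).const_mul _)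
    simp_rw [hsplit]
    fun_prop
  · have hnot : ∀ t : ℝ, ¬ Integrable (fun x => A x + 2 * t * B x + t ^ 2 * C x +
        exp (t * c x) * (D x + 2 * t * E x + t ^ 2 * G x)) μ := fun t ht =>
      h (integrable_of_integrable_quadratic_add_exp_mul_quadratic hc hcM hA hB hD hC hG
        hABC hDEG ht)
    simp_rw [integral_undef (hnot _)]
    exact contDiff_const

end QuadraticExpIntegral

section Gradient

variable {f g : ℝ × ℝ → ℝ} {p : ℝ × ℝ}

@[fun_prop]
lemma measurable_pdR (f : ℝ × ℝ → ℝ) : Measurable (pdR f) :=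
  measurable_fderiv_apply_const ℝ f _

@[fun_prop]
lemma measurable_pdZ (f : ℝ × ℝ → ℝ) : Measurable (pdZ f) :=
  measurable_fderiv_apply_const ℝ f _

@[fun_prop]
lemma measurable_gradSq (f : ℝ × ℝ → ℝ) : Measurable (gradSq f) := by
  unfold gradSq
  fun_prop

@[fun_prop]
lemma measurable_gradDot (f g : ℝ × ℝ → ℝ) : Measurable (gradDot f g) := by
  unfold gradDot
  fun_prop

lemma gradSq_nonneg (f : ℝ × ℝ → ℝ) (p : ℝ × ℝ) : 0 ≤ gradSq f p := by
  unfold gradSq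
  positivity

lemma gradSq_add_mul (hf : DifferentiableAt ℝ f p) (hg : DifferentiableAt ℝ g p) (t : ℝ) :
    gradSq (fun q => f q + t * g q) p =
      gradSq f p + 2 * t * gradDot f g p + t ^ 2 * gradSq g p := by
  have h : fderiv ℝ (fun q => f q + t * g q) p = fderiv ℝ f p + t • fderiv ℝ g p := by
    rw [fderiv_fun_add hf (hg.const_mul t), fderiv_const_mul hg]
  simp only [gradSq, gradDot, pdR, pdZ, h, add_apply, smul_apply, smul_eq_mul]
  ring

lemma quadratic_gradSq_nonneg {w : ℝ} (hw : 0 ≤ w) (hf : DifferentiableAt ℝ f p)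
    (hg : DifferentiableAt ℝ g p) (s : ℝ) :
    0 ≤ w * gradSq f p + 2 * s * (w * gradDot f g p) + s ^ 2 * (w * gradSq g p) := by
  have h := mul_nonneg hw (gradSq_nonneg (fun q => f q + s * g q) p)
  rw [gradSq_add_mul hf hg] at h
  linarith

lemma gradSq_eq_zero_of_eventuallyEq_zero (h : f =ᶠ[nhds p] 0) : gradSq f p = 0 := by
  simp [gradSq, pdR, pdZ, h.fderiv_eq]

end Gradient

section WeightedNorm

lemma one_le_sgm (p : ℝ × ℝ) : 1 ≤ sgm p :=
  Real.one_le_sqrt.2 (le_add_of_nonneg_left (sq_nonneg _))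

lemma sgm_pos (p : ℝ × ℝ) : 0 < sgm p := zero_lt_one.trans_le (one_le_sgm p)

lemma norm_le_sgm (p : ℝ × ℝ) : ‖p‖ ≤ sgm p := by
  rw [Prod.norm_def, sgm, rr, Real.sq_sqrt (by positivity)]
  refine max_le ?_ ?_ <;> refine Real.le_sqrt_of_sq_le ?_ <;>
    simp only [Real.norm_eq_abs, sq_abs] <;> nlinarith [sq_nonneg p.1, sq_nonneg p.2]

lemma fst_le_sgm (p : ℝ × ℝ) : p.1 ≤ sgm p :=
  (le_abs_self p.1).trans ((norm_fst_le p).trans (norm_le_sgm p))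

lemma integrable_sgm_rpow {γ : ℝ} (hγ : γ < -2) :
    Integrable fun p : ℝ × ℝ => sgm p ^ γ := by
  have hdim : (Module.finrank ℝ (ℝ × ℝ) : ℝ) < -γ := by
    simp only [Module.finrank_prod, Module.finrank_self]
    push_cast
    linarith
  refine ((integrable_one_add_norm hdim).const_mul (2 ^ (-γ))).mono'
    (Measurable.aestronglyMeasurable (by unfold sgm rr; fun_prop)) (ae_of_all _ fun p => ?_)
  rw [Real.norm_of_nonneg (Real.rpow_nonneg (sgm_pos p).le _), neg_neg,
    Real.rpow_neg zero_le_two, ← Real.inv_rpow zero_le_two,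
    ← Real.mul_rpow (by norm_num) (by positivity)]
  exact Real.rpow_le_rpow_of_nonpos (by positivity)
    (by linarith [one_le_sgm p, norm_le_sgm p]) (by linarith)

lemma abs_le_of_wFn_le {β K : ℝ} {f : ℝ × ℝ → ℝ} {p : ℝ × ℝ} (hβ : β ≤ 0)
    (h : wFn β f p ≤ K) : |f p| ≤ K :=
  calc |f p| ≤ sgm p ^ (-β) * |f p| :=
        le_mul_of_one_le_left (abs_nonneg _) (Real.one_le_rpow (one_le_sgm p) (by linarith))
    _ ≤ wFn β f p :=
        le_add_of_nonneg_right (mul_nonneg (Real.rpow_nonneg (sgm_pos p).le _) (Real.sqrt_nonneg _))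
    _ ≤ K := h

lemma gradSq_le_of_wFn_le {β K : ℝ} {f : ℝ × ℝ → ℝ} {p : ℝ × ℝ}
    (h : wFn β f p ≤ K) : gradSq f p ≤ K ^ 2 * sgm p ^ (2 * β - 2) := by
  have hσ := sgm_pos p
  have h1 : sgm p ^ (-β + 1) * √(gradSq f p) ≤ K :=
    (le_add_of_nonneg_left (mul_nonneg (Real.rpow_nonneg hσ.le _) (abs_nonneg _))).trans h
  have h2 : √(gradSq f p) ≤ K * sgm p ^ (β - 1) := by
    rwa [← le_div_iff₀' (Real.rpow_pos_of_pos hσ _), div_eq_mul_inv, ← Real.rpow_neg hσ.le,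
      neg_add, neg_neg, ← sub_eq_add_neg] at h1
  calc gradSq f p = √(gradSq f p) ^ 2 := (Real.sq_sqrt (gradSq_nonneg f p)).symm
    _ ≤ (K * sgm p ^ (β - 1)) ^ 2 := pow_le_pow_left₀ (Real.sqrt_nonneg _) h2 2
    _ = K ^ 2 * sgm p ^ (2 * β - 2) := by
      rw [mul_pow, ← Real.rpow_natCast (sgm p ^ (β - 1)), ← Real.rpow_mul hσ.le]
      ring_nf

end WeightedNorm

section Kerr

variable {J : ℝ} {p : ℝ × ℝ}

lemma rr_pos (hp : 0 < p.1) : 0 < rr p := Real.sqrt_pos.2 (by positivity)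

lemma Sg_pos (hp : 0 < p.1) : 0 < Sg J p := by
  have := rr_pos hp
  unfold Sg rt
  positivity

/-- With `u = r̃² + |J|`, one has `Σ (X₀ - ρ²) = u (u - r²) sin²θ`, and `u ≥ r²`. -/
lemma fst_sq_le_X0 (hp : 0 < p.1) : p.1 ^ 2 ≤ X0 J p := by
  have hr := rr_pos hp
  have hr2 : rr p ^ 2 = p.1 ^ 2 + p.2 ^ 2 := Real.sq_sqrt (by positivity)
  have hs : p.1 ^ 2 = sin2T p * rr p ^ 2 := by unfold sin2T; field_simp
  have hc : cosT p ^ 2 = 1 - sin2T p := by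
    unfold cosT sin2T
    field_simp
    linarith
  have hs0 : 0 ≤ sin2T p := by unfold sin2T; positivity
  rw [X0, le_div_iff₀ (Sg_pos hp), Sg, rt, hc, hs]
  set a := √|J|
  have ha : 0 ≤ a := Real.sqrt_nonneg |J|
  rw [show |J| = a ^ 2 from (Real.sq_sqrt (abs_nonneg J)).symm]
  set u := (rr p + a) ^ 2 + a ^ 2
  have hu : 0 ≤ u * (u - rr p ^ 2) := mul_nonneg (by positivity) (by nlinarith)
  nlinarith [mul_nonneg hs0 hu]

lemma X0_pos (hp : 0 < p.1) : 0 < X0 J p :=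
  (pow_pos hp 2).trans_le (fst_sq_le_X0 hp)

lemma v0_nonneg (hp : 0 < p.1) : 0 ≤ v0 J p := by
  have h := Real.log_le_log (pow_pos hp 2) (fst_sq_le_X0 (J := J) hp)
  rw [Real.log_pow] at h
  unfold v0
  push_cast at h
  linarith

lemma differentiableAt_Y0 (hp : 0 < p.1) : DifferentiableAt ℝ (Y0 J) p := by
  unfold Y0 Sg rt cosT sin2T rr
  fun_prop (disch := positivity)

lemma differentiableAt_v0 (hp : 0 < p.1) : DifferentiableAt ℝ (v0 J) p := by
  have hX : DifferentiableAt ℝ (X0 J) p := by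
    unfold X0 Sg rt cosT sin2T rr
    fun_prop (disch := positivity)
  exact (hX.log (X0_pos hp).ne').sub ((differentiableAt_fst.log hp.ne').const_mul 2)

@[fun_prop]
lemma measurable_v0 (J : ℝ) : Measurable (v0 J) := by
  unfold v0 X0 Sg rt cosT sin2T rr
  fun_prop

/-- The factor `ρ · ρ⁻⁴ e^{-2v₀}` of `|∂Y|²` in the mass density of `(v₀ + tα, Y)`, with
the `e^{-2tα}` part split off. -/
def kerrWeight (J : ℝ) (p : ℝ × ℝ) : ℝ := exp (-2 * v0 J p) / p.1 ^ 3

lemma kerrWeight_nonneg (hp : 0 < p.1) : 0 ≤ kerrWeight J p := by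
  unfold kerrWeight
  positivity

lemma kerrWeight_le (hp : 0 < p.1) : kerrWeight J p ≤ (p.1 ^ 3)⁻¹ := by
  rw [kerrWeight, div_eq_mul_inv]
  exact mul_le_of_le_one_left (by positivity)
    (exp_le_one_iff.2 (by linarith [v0_nonneg (J := J) hp]))

@[fun_prop]
lemma measurable_kerrWeight (J : ℝ) : Measurable (kerrWeight J) := by
  unfold kerrWeight
  fun_prop

end Kerr

lemma measurableSet_HP : MeasurableSet HP := measurableSet_lt measurable_const measurable_fst

lemma ae_fst_ne (c : ℝ) : ∀ᵐ p : ℝ × ℝ, p.1 ≠ c := by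
  have h : volume (Prod.fst ⁻¹' {c} : Set (ℝ × ℝ)) = 0 := by
    rw [← Set.prod_univ, Measure.volume_eq_prod, Measure.prod_prod, Real.volume_singleton,
      zero_mul]
  exact measure_eq_zero_iff_ae_notMem.1 h

namespace Bsp

variable {ρ₀ β : ℝ} (φ : Bsp ρ₀ β)

lemma exists_abs_a_le (hβ : β ≤ 0) : ∃ K, ∀ p ∈ HP, |φ.a p| ≤ K :=
  let ⟨K, hK⟩ := φ.hba
  ⟨K, fun p hp => abs_le_of_wFn_le hβ (hK ⟨p, hp, rfl⟩)⟩

lemma integrable_fst_mul_gradSq_a (hβ : β < -(1 / 2)) :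
    Integrable (fun p => p.1 * gradSq φ.a p) (volume.restrict HP) := by
  obtain ⟨K, hK⟩ := φ.hba
  refine ((integrable_sgm_rpow (γ := 2 * β - 1) (by linarith)).const_mul
    (K ^ 2)).restrict.mono' (by fun_prop) ?_
  filter_upwards [ae_restrict_mem measurableSet_HP] with p hp
  have hσ := sgm_pos p
  rw [Real.norm_of_nonneg (mul_nonneg (le_of_lt hp) (gradSq_nonneg _ _))]
  calc p.1 * gradSq φ.a p ≤ sgm p * (K ^ 2 * sgm p ^ (2 * β - 2)) :=
        mul_le_mul (fst_le_sgm p) (gradSq_le_of_wFn_le (hK ⟨p, hp, rfl⟩)) (gradSq_nonneg _ _)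
          hσ.le
    _ = K ^ 2 * sgm p ^ (2 * β - 1) := by
      rw [show 2 * β - 1 = 2 * β - 2 + 1 by ring, Real.rpow_add_one hσ.ne']
      ring

/-- `y` vanishes on the open set `ρ < ρ₀`, on `ρ > ρ₀` the Kerr weight is at most `ρ₀⁻³`,
and the line `ρ = ρ₀` is null. -/
lemma integrable_kerrWeight_mul_gradSq_y (J : ℝ) (hρ₀ : 0 < ρ₀) (hβ : β < -(1 / 2)) :
    Integrable (fun p => kerrWeight J p * gradSq φ.y p) (volume.restrict HP) := by
  obtain ⟨K, hK⟩ := φ.hby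
  refine ((integrable_sgm_rpow (γ := 2 * β - 2) (by linarith)).const_mul
    ((ρ₀ ^ 3)⁻¹ * K ^ 2)).restrict.mono' (by fun_prop) ?_
  filter_upwards [ae_restrict_mem measurableSet_HP, ae_restrict_of_ae (ae_fst_ne ρ₀)]
    with p (hp : 0 < p.1) hne
  have hbound : 0 ≤ (ρ₀ ^ 3)⁻¹ * K ^ 2 * sgm p ^ (2 * β - 2) :=
    mul_nonneg (by positivity) (Real.rpow_nonneg (sgm_pos p).le _)
  rw [Real.norm_of_nonneg (mul_nonneg (kerrWeight_nonneg hp) (gradSq_nonneg _ _))]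
  rcases hne.lt_or_gt with hlt | hgt
  · have hy : φ.y =ᶠ[nhds p] 0 := by
      filter_upwards [(isOpen_lt continuous_fst continuous_const).mem_nhds hlt] with q hq
      exact φ.hy0 q (le_of_lt hq)
    rwa [gradSq_eq_zero_of_eventuallyEq_zero hy, mul_zero]
  · calc kerrWeight J p * gradSq φ.y p ≤ (ρ₀ ^ 3)⁻¹ * (K ^ 2 * sgm p ^ (2 * β - 2)) :=
          mul_le_mul ((kerrWeight_le hp).trans
              (inv_anti₀ (by positivity) (pow_le_pow_left₀ hρ₀.le hgt.le 3)))
            (gradSq_le_of_wFn_le (hK ⟨p, hgt, rfl⟩)) (gradSq_nonneg _ _) (by positivity)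
      _ = (ρ₀ ^ 3)⁻¹ * K ^ 2 * sgm p ^ (2 * β - 2) := by ring

end Bsp

lemma iF_eq_integral {J ρ₀ β : ℝ} (φ : Bsp ρ₀ β) (t : ℝ) :
    iF J ρ₀ β φ t = 1 / 16 * ∫ p in HP,
      p.1 * gradSq (v0 J) p + 2 * t * (p.1 * gradDot (v0 J) φ.a p) +
        t ^ 2 * (p.1 * gradSq φ.a p) +
      exp (t * (-2 * φ.a p)) * (kerrWeight J p * gradSq (Y0 J) p +
        2 * t * (kerrWeight J p * gradDot (Y0 J) φ.y p) +
        t ^ 2 * (kerrWeight J p * gradSq φ.y p)) := by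
  rw [iF, MF, intR3, setIntegral_congr_fun measurableSet_HP fun p (hp : 0 < p.1) => ?_]
  · field_simp
    ring
  · rw [gradSq_add_mul (differentiableAt_v0 hp) (φ.ha.differentiable one_ne_zero p),
      gradSq_add_mul (differentiableAt_Y0 hp) (φ.hy.differentiable one_ne_zero p), kerrWeight,
      show -2 * (v0 J p + t * φ.a p) = -2 * v0 J p + t * (-2 * φ.a p) by ring, exp_add]
    field_simp

theorem iF_isC2_general (J ρ₀ β : ℝ) (hρ₀ : 0 < ρ₀) (hβ : β < -(1 / 2))
    (φ : Bsp ρ₀ β) :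
    ContDiff ℝ 2 (iF J ρ₀ β φ) ∧
      ∀ t : ℝ, DifferentiableAt ℝ (iteratedDeriv 2 (iF J ρ₀ β φ)) t := by
  suffices h : ContDiff ℝ ∞ (iF J ρ₀ β φ) from
    ⟨h.of_le (by norm_cast), h.differentiable_iteratedDeriv 2 (by norm_cast)⟩
  obtain ⟨K, hK⟩ := φ.exists_abs_a_le (by linarith)
  have hHP : ∀ᵐ p ∂(volume.restrict HP), 0 < p.1 := ae_restrict_mem measurableSet_HP
  have hmeas := φ.ha.continuous.measurable
  rw [funext (iF_eq_integral φ)]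
  refine contDiff_const.mul (contDiff_integral_quadratic_add_exp_mul_quadratic (M := 2 * K)
    (by fun_prop) ?_ (by fun_prop) (by fun_prop) (by fun_prop) (by fun_prop)
    (φ.integrable_fst_mul_gradSq_a hβ) (φ.integrable_kerrWeight_mul_gradSq_y J hρ₀ hβ) ?_ ?_)
  · filter_upwards [hHP] with p hp
    rw [abs_mul, abs_neg, abs_two]
    linarith [hK p hp]
  · filter_upwards [hHP] with p hp
    exact quadratic_gradSq_nonneg hp.le (differentiableAt_v0 hp)
      (φ.ha.differentiable one_ne_zero p)
  · filter_upwards [hHP] with p hp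
    exact quadratic_gradSq_nonneg (kerrWeight_nonneg hp) (differentiableAt_Y0 hp)
      (φ.hy.differentiable one_ne_zero p)

/-- For every φ ∈ 𝓑 the function i_φ(t) = M(u₀ + tφ) is twice continuously
differentiable in t on ℝ; indeed, its third derivative exists for all t. -/
theorem iF_isC2 (J ρ₀ β : ℝ) (hJ : J ≠ 0) (hρ₀ : 0 < ρ₀) (hβ : β < -(1 / 2))
    (φ : Bsp ρ₀ β) :
    ContDiff ℝ 2 (iF J ρ₀ β φ) ∧
      ∀ t : ℝ, DifferentiableAt ℝ (iteratedDeriv 2 (iF J ρ₀ β φ)) t :=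
  iF_isC2_general J ρ₀ β hρ₀ hβ φ
end
end

section
/- Carter's identity: let v, Y, α, y be C² axisymmetric functions and set X = ρ² e^{v}. Define G_v = Δv + X⁻² |∂Y|², G_Y = div(X⁻² ∂Y), G'_v = Δα + (2 ∂y·∂Y − 2α |∂Y|²) X⁻², G'_Y = div(X⁻² (∂y − 2α ∂Y)), and F = |∂α + y X⁻² ∂Y|² + |∂(y X⁻¹) − X⁻¹ α ∂Y|² + |X⁻¹ α ∂Y − y X⁻² ∂X|². Then at every point with ρ > 0, F + α G'_v + y G'_Y + 2 α y G_Y − X⁻² y² G_v = div(α ∂α + y X⁻¹ ∂(y X⁻¹)). -/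
open Real MeasureTheory

noncomputable section

/-- X = ρ² e^v. -/
def Xof (v : ℝ × ℝ → ℝ) (p : ℝ × ℝ) : ℝ := p.1 ^ 2 * Real.exp (v p)

/-- G_v = Δv + X⁻² |∂Y|². -/
def Gv (v Y : ℝ × ℝ → ℝ) (p : ℝ × ℝ) : ℝ :=
  lap v p + ((Xof v p) ^ 2)⁻¹ * gradSq Y p

/-- G_Y = div(X⁻² ∂Y). -/
def GY (v Y : ℝ × ℝ → ℝ) (p : ℝ × ℝ) : ℝ :=
  divg (fun q => ((Xof v q) ^ 2)⁻¹ * pdR Y q) (fun q => ((Xof v q) ^ 2)⁻¹ * pdZ Y q) p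

/-- G'_v = Δα + (2 ∂y·∂Y − 2α |∂Y|²) X⁻². -/
def Gv' (v Y a y : ℝ × ℝ → ℝ) (p : ℝ × ℝ) : ℝ :=
  lap a p + (2 * gradDot y Y p - 2 * a p * gradSq Y p) * ((Xof v p) ^ 2)⁻¹

/-- G'_Y = div(X⁻² (∂y − 2α ∂Y)). -/
def GY' (v Y a y : ℝ × ℝ → ℝ) (p : ℝ × ℝ) : ℝ :=
  divg (fun q => ((Xof v q) ^ 2)⁻¹ * (pdR y q - 2 * a q * pdR Y q))
       (fun q => ((Xof v q) ^ 2)⁻¹ * (pdZ y q - 2 * a q * pdZ Y q)) p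

/-- F = |∂α + yX⁻²∂Y|² + |∂(yX⁻¹) − X⁻¹α∂Y|² + |X⁻¹α∂Y − yX⁻²∂X|². -/
def Fc (v Y a y : ℝ × ℝ → ℝ) (p : ℝ × ℝ) : ℝ :=
  (pdR a p + y p * ((Xof v p) ^ 2)⁻¹ * pdR Y p) ^ 2 +
    (pdZ a p + y p * ((Xof v p) ^ 2)⁻¹ * pdZ Y p) ^ 2 +
  ((pdR (fun q => y q * (Xof v q)⁻¹) p - (Xof v p)⁻¹ * a p * pdR Y p) ^ 2 +
    (pdZ (fun q => y q * (Xof v q)⁻¹) p - (Xof v p)⁻¹ * a p * pdZ Y p) ^ 2) +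
  (((Xof v p)⁻¹ * a p * pdR Y p - y p * ((Xof v p) ^ 2)⁻¹ * pdR (Xof v) p) ^ 2 +
    ((Xof v p)⁻¹ * a p * pdZ Y p - y p * ((Xof v p) ^ 2)⁻¹ * pdZ (Xof v) p) ^ 2)

/-!
Expanding every divergence by the Leibniz rule `div (f W) = f div W + ∂f · W` and the three
squares of `F`, all terms containing `∂α`, `∂Y`, `Δα` or `ΔY` cancel in pairs. The remaining
terms, which involve only `y` and `X`, add up to `X⁻² y² (Δ log X - Δv)`, and this vanishes:
`log X = 2 log ρ + v`, and `log ρ` is harmonic on `ℝ³`.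
-/

open Topology

section DirectionalDerivative

variable {E : Type*} [NormedAddCommGroup E] [NormedSpace ℝ E] {f g : E → ℝ} {x w : E}

theorem fderiv_fun_mul_apply (hf : DifferentiableAt ℝ f x) (hg : DifferentiableAt ℝ g x) :
    fderiv ℝ (fun q => f q * g q) x w = fderiv ℝ f x w * g x + f x * fderiv ℝ g x w := by
  rw [fderiv_fun_mul hf hg]
  simp only [add_apply, smul_apply, smul_eq_mul]
  ring

theorem fderiv_fun_sq_apply (hf : DifferentiableAt ℝ f x) :
    fderiv ℝ (fun q => f q ^ 2) x w = 2 * f x * fderiv ℝ f x w := by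
  simp only [sq, fderiv_fun_mul_apply hf hf]
  ring

theorem fderiv_fun_comp_apply {φ : ℝ → ℝ} (hφ : DifferentiableAt ℝ φ (f x))
    (hf : DifferentiableAt ℝ f x) :
    fderiv ℝ (fun q => φ (f q)) x w = deriv φ (f x) * fderiv ℝ f x w :=
  congrArg (· w) (hφ.hasDerivAt.comp_hasFDerivAt x hf.hasFDerivAt).fderiv

theorem fderiv_fun_inv_apply (hf : DifferentiableAt ℝ f x) (hx : f x ≠ 0) :
    fderiv ℝ (fun q => (f q)⁻¹) x w = -fderiv ℝ f x w / f x ^ 2 := by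
  rw [fderiv_fun_comp_apply (differentiableAt_inv hx) hf, deriv_inv]
  ring

theorem fderiv_fun_exp_apply (hf : DifferentiableAt ℝ f x) :
    fderiv ℝ (fun q => Real.exp (f q)) x w = Real.exp (f x) * fderiv ℝ f x w := by
  rw [fderiv_fun_comp_apply Real.differentiableAt_exp hf, Real.deriv_exp]

theorem fderiv_fst_apply {F : Type*} [NormedAddCommGroup F] [NormedSpace ℝ F] {x w : E × F} :
    fderiv ℝ (fun q : E × F => q.1) x w = w.1 := by
  rw [fderiv_fst]
  rfl

theorem ContDiffAt.differentiableAt_fderiv_apply (hf : ContDiffAt ℝ 2 f x) (w : E) :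
    DifferentiableAt ℝ (fun q => fderiv ℝ f q w) x :=
  ((hf.fderiv_right (m := 1) (by norm_num)).differentiableAt one_ne_zero).clm_apply
    (differentiableAt_const w)

end DirectionalDerivative

section Axisymmetric

variable {f g k l Wr Wz Vr Vz : ℝ × ℝ → ℝ} {p : ℝ × ℝ}

theorem ContDiffAt.differentiableAt_pdR (hf : ContDiffAt ℝ 2 f p) :
    DifferentiableAt ℝ (pdR f) p :=
  hf.differentiableAt_fderiv_apply _

theorem ContDiffAt.differentiableAt_pdZ (hf : ContDiffAt ℝ 2 f p) :
    DifferentiableAt ℝ (pdZ f) p :=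
  hf.differentiableAt_fderiv_apply _

theorem divg_congr (hr : Wr =ᶠ[𝓝 p] Vr) (hz : Wz =ᶠ[𝓝 p] Vz) :
    divg Wr Wz p = divg Vr Vz p := by
  simp only [divg, pdR, pdZ, hr.fderiv_eq, hz.fderiv_eq, hr.eq_of_nhds]

theorem divg_add (hWr : DifferentiableAt ℝ Wr p) (hWz : DifferentiableAt ℝ Wz p)
    (hVr : DifferentiableAt ℝ Vr p) (hVz : DifferentiableAt ℝ Vz p) :
    divg (fun q => Wr q + Vr q) (fun q => Wz q + Vz q) p = divg Wr Wz p + divg Vr Vz p := by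
  simp only [divg, pdR, pdZ, fderiv_fun_add hWr hVr, fderiv_fun_add hWz hVz, add_apply]
  ring

theorem divg_sub (hWr : DifferentiableAt ℝ Wr p) (hWz : DifferentiableAt ℝ Wz p)
    (hVr : DifferentiableAt ℝ Vr p) (hVz : DifferentiableAt ℝ Vz p) :
    divg (fun q => Wr q - Vr q) (fun q => Wz q - Vz q) p = divg Wr Wz p - divg Vr Vz p := by
  simp only [divg, pdR, pdZ, fderiv_fun_sub hWr hVr, fderiv_fun_sub hWz hVz, sub_apply]
  ring

theorem divg_mul (hf : DifferentiableAt ℝ f p) (hWr : DifferentiableAt ℝ Wr p)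
    (hWz : DifferentiableAt ℝ Wz p) :
    divg (fun q => f q * Wr q) (fun q => f q * Wz q) p =
      f p * divg Wr Wz p + (pdR f p * Wr p + pdZ f p * Wz p) := by
  simp only [divg, pdR, pdZ, fderiv_fun_mul_apply hf hWr, fderiv_fun_mul_apply hf hWz]
  ring

theorem lap_eq_divg : lap f p = divg (pdR f) (pdZ f) p := rfl

theorem divg_mul_grad (hf : DifferentiableAt ℝ f p) (hg : ContDiffAt ℝ 2 g p) :
    divg (fun q => f q * pdR g q) (fun q => f q * pdZ g q) p = f p * lap g p + gradDot f g p :=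
  divg_mul hf hg.differentiableAt_pdR hg.differentiableAt_pdZ

theorem divg_mul_grad_add_mul_grad (hf : DifferentiableAt ℝ f p) (hg : ContDiffAt ℝ 2 g p)
    (hk : DifferentiableAt ℝ k p) (hl : ContDiffAt ℝ 2 l p) :
    divg (fun q => f q * pdR g q + k q * pdR l q) (fun q => f q * pdZ g q + k q * pdZ l q) p =
      f p * lap g p + gradDot f g p + (k p * lap l p + gradDot k l p) := by
  rw [divg_add (hf.fun_mul hg.differentiableAt_pdR) (hf.fun_mul hg.differentiableAt_pdZ)
    (hk.fun_mul hl.differentiableAt_pdR) (hk.fun_mul hl.differentiableAt_pdZ),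
    divg_mul_grad hf hg, divg_mul_grad hk hl]

theorem lap_mul (hf : ContDiffAt ℝ 2 f p) (hg : ContDiffAt ℝ 2 g p) :
    lap (fun q => f q * g q) p = f p * lap g p + 2 * gradDot f g p + g p * lap f p := by
  have h : ∀ᶠ q in 𝓝 p, ∀ w,
      fderiv ℝ (fun q => f q * g q) q w = f q * fderiv ℝ g q w + g q * fderiv ℝ f q w := by
    filter_upwards [hf.eventually (by simp), hg.eventually (by simp)] with q hfq hgq w
    rw [fderiv_fun_mul_apply (hfq.differentiableAt two_ne_zero)
      (hgq.differentiableAt two_ne_zero)]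
    ring
  have hr : pdR (fun q => f q * g q) =ᶠ[𝓝 p] fun q => f q * pdR g q + g q * pdR f q :=
    h.mono fun _ hq => hq _
  have hz : pdZ (fun q => f q * g q) =ᶠ[𝓝 p] fun q => f q * pdZ g q + g q * pdZ f q :=
    h.mono fun _ hq => hq _
  rw [lap_eq_divg, divg_congr hr hz, divg_mul_grad_add_mul_grad
    (hf.differentiableAt two_ne_zero) hg (hg.differentiableAt two_ne_zero) hf, gradDot, gradDot]
  ring

theorem lap_comp {φ : ℝ → ℝ} (hφ : ContDiffAt ℝ 2 φ (f p)) (hf : ContDiffAt ℝ 2 f p) :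
    lap (fun q => φ (f q)) p = deriv φ (f p) * lap f p + deriv (deriv φ) (f p) * gradSq f p := by
  have h : ∀ᶠ q in 𝓝 p, ∀ w,
      fderiv ℝ (fun q => φ (f q)) q w = deriv φ (f q) * fderiv ℝ f q w := by
    filter_upwards [hf.continuousAt.eventually (hφ.eventually (by simp)),
      hf.eventually (by simp)] with q hφq hfq w
    exact fderiv_fun_comp_apply (hφq.differentiableAt two_ne_zero)
      (hfq.differentiableAt two_ne_zero)
  have hφ' : DifferentiableAt ℝ (deriv φ) (f p) := hφ.differentiableAt_fderiv_apply 1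
  have hr : pdR (fun q => φ (f q)) =ᶠ[𝓝 p] fun q => deriv φ (f q) * pdR f q :=
    h.mono fun _ hq => hq _
  have hz : pdZ (fun q => φ (f q)) =ᶠ[𝓝 p] fun q => deriv φ (f q) * pdZ f q :=
    h.mono fun _ hq => hq _
  have hf1 := hf.differentiableAt two_ne_zero
  have hφ'f : DifferentiableAt ℝ (fun q => deriv φ (f q)) p := hφ'.comp p hf1
  rw [lap_eq_divg, divg_congr hr hz, divg_mul_grad hφ'f hf]
  simp only [gradDot, gradSq, pdR, pdZ, fderiv_fun_comp_apply hφ' hf1]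
  ring

theorem lap_exp (hf : ContDiffAt ℝ 2 f p) :
    lap (fun q => Real.exp (f q)) p = Real.exp (f p) * (lap f p + gradSq f p) := by
  simp only [lap_comp Real.contDiff_exp.contDiffAt hf, Real.deriv_exp]
  ring

theorem lap_inv (hf : ContDiffAt ℝ 2 f p) (hp : f p ≠ 0) :
    lap (fun q => (f q)⁻¹) p = -lap f p / f p ^ 2 + 2 * gradSq f p / f p ^ 3 := by
  have h2 : deriv (fun t : ℝ => -(t ^ 2)⁻¹) (f p) = 2 / f p ^ 3 := by
    rw [((hasDerivAt_pow 2 (f p)).fun_inv (pow_ne_zero 2 hp)).fun_neg.deriv]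
    field_simp
    ring
  rw [lap_comp (contDiffAt_inv ℝ hp) hf, deriv_inv', h2]
  ring

theorem lap_fst_sq (hp : p.1 ≠ 0) : lap (fun q : ℝ × ℝ => q.1 ^ 2) p = 4 := by
  have hfst : ∀ q : ℝ × ℝ, DifferentiableAt ℝ (fun q : ℝ × ℝ => q.1) q :=
    fun _ => differentiableAt_fst
  have hr : pdR (fun q : ℝ × ℝ => q.1 ^ 2) = fun q => 2 * q.1 := by
    funext q
    simp only [pdR, fderiv_fun_sq_apply (hfst q), fderiv_fst_apply, mul_one]
  have hz : pdZ (fun q : ℝ × ℝ => q.1 ^ 2) = fun _ => 0 := by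
    funext q
    simp only [pdZ, fderiv_fun_sq_apply (hfst q), fderiv_fst_apply, mul_zero]
  rw [lap, hr, hz, pdR, pdZ, fderiv_const_mul (hfst p), smul_apply, fderiv_fst_apply,
    fderiv_fun_const]
  simp only [smul_eq_mul, mul_one, Pi.zero_apply, zero_apply, add_zero]
  field_simp
  norm_num

end Axisymmetric

section CarterIdentity

variable {v Y a y : ℝ × ℝ → ℝ} {p : ℝ × ℝ}

theorem Xof_ne_zero (hp : p.1 ≠ 0) : Xof v p ≠ 0 :=
  mul_ne_zero (pow_ne_zero 2 hp) (Real.exp_ne_zero _)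

theorem ContDiffAt.Xof (hv : ContDiffAt ℝ 2 v p) : ContDiffAt ℝ 2 (Xof v) p :=
  (contDiffAt_fst.pow 2).mul hv.exp

/-- `Δv = Δ log X`. -/
theorem lap_eq_Xof_lap_sub_gradSq_div (hv : ContDiffAt ℝ 2 v p) (hp : p.1 ≠ 0) :
    lap v p = (Xof v p * lap (Xof v) p - gradSq (Xof v) p) / Xof v p ^ 2 := by
  have hv1 := hv.differentiableAt two_ne_zero
  have hfst : DifferentiableAt ℝ (fun q : ℝ × ℝ => q.1) p := differentiableAt_fst
  have hρ : DifferentiableAt ℝ (fun q : ℝ × ℝ => q.1 ^ 2) p := hfst.pow 2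
  simp only [show Xof v = fun q => q.1 ^ 2 * Real.exp (v q) from rfl]
  rw [lap_mul (contDiffAt_fst.pow 2) hv.exp, lap_fst_sq hp, lap_exp hv]
  simp only [gradDot, gradSq, pdR, pdZ, fderiv_fun_mul_apply hρ hv1.exp,
    fderiv_fun_sq_apply hfst, fderiv_fun_exp_apply hv1, fderiv_fst_apply]
  field_simp
  ring

theorem GY'_eq (hv : DifferentiableAt ℝ v p) (hY : ContDiffAt ℝ 2 Y p)
    (ha : DifferentiableAt ℝ a p) (hy : ContDiffAt ℝ 2 y p) (hp : p.1 ≠ 0) :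
    GY' v Y a y p = (Xof v p ^ 2)⁻¹ * (lap y p - 2 * gradDot a Y p) +
      gradDot (fun q => (Xof v q ^ 2)⁻¹) y p - 2 * a p * GY v Y p := by
  have hX2 : DifferentiableAt ℝ (fun q => (Xof v q ^ 2)⁻¹) p :=
    (((differentiableAt_fst.pow 2).mul hv.exp).pow 2).inv (pow_ne_zero 2 (Xof_ne_zero hp))
  have h2a : DifferentiableAt ℝ (fun q => 2 * a q) p := ha.const_mul 2
  rw [GY', GY,
    divg_mul hX2 (hy.differentiableAt_pdR.fun_sub (h2a.fun_mul hY.differentiableAt_pdR))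
      (hy.differentiableAt_pdZ.fun_sub (h2a.fun_mul hY.differentiableAt_pdZ)),
    divg_sub hy.differentiableAt_pdR hy.differentiableAt_pdZ
      (h2a.fun_mul hY.differentiableAt_pdR) (h2a.fun_mul hY.differentiableAt_pdZ),
    divg_mul_grad h2a hY, divg_mul_grad hX2 hY, ← lap_eq_divg]
  simp only [gradDot, pdR, pdZ, fderiv_const_mul ha, smul_apply, smul_eq_mul]
  ring

end CarterIdentity

/-- Carter's identity: for C² axisymmetric functions v, Y, α, y and
X = ρ² e^v, at every point with ρ > 0,
F + α G'_v + y G'_Y + 2αy G_Y − X⁻² y² G_v = div(α ∂α + y X⁻¹ ∂(y X⁻¹)). -/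
theorem carter_identity (v Y a y : ℝ × ℝ → ℝ)
    (hv : ContDiff ℝ 2 v) (hY : ContDiff ℝ 2 Y)
    (ha : ContDiff ℝ 2 a) (hy : ContDiff ℝ 2 y) :
    ∀ p : ℝ × ℝ, 0 < p.1 →
      Fc v Y a y p + a p * Gv' v Y a y p + y p * GY' v Y a y p +
          2 * a p * y p * GY v Y p - ((Xof v p) ^ 2)⁻¹ * (y p) ^ 2 * Gv v Y p =
        divg
          (fun q => a q * pdR a q +
            y q * (Xof v q)⁻¹ * pdR (fun s => y s * (Xof v s)⁻¹) q)
          (fun q => a q * pdZ a q +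
            y q * (Xof v q)⁻¹ * pdZ (fun s => y s * (Xof v s)⁻¹) q) p := by
  intro p hp
  have hX0 : Xof v p ≠ 0 := Xof_ne_zero hp.ne'
  have hX : ContDiffAt ℝ 2 (Xof v) p := hv.contDiffAt.Xof
  have hX1 := hX.differentiableAt two_ne_zero
  have hX2 : DifferentiableAt ℝ (fun q => Xof v q ^ 2) p := hX1.pow 2
  have hXinv : ContDiffAt ℝ 2 (fun q => (Xof v q)⁻¹) p := hX.inv hX0
  have hh : ContDiffAt ℝ 2 (fun q => y q * (Xof v q)⁻¹) p := hy.contDiffAt.mul hXinv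
  have ha1 := ha.differentiable two_ne_zero p
  have hy1 := hy.differentiable two_ne_zero p
  rw [GY'_eq (hv.differentiable two_ne_zero p) hY.contDiffAt ha1 hy.contDiffAt hp.ne',
    divg_mul_grad_add_mul_grad ha1 ha.contDiffAt (hh.differentiableAt two_ne_zero) hh,
    lap_mul hy.contDiffAt hXinv, lap_inv hX hX0, Gv,
    lap_eq_Xof_lap_sub_gradSq_div hv.contDiffAt hp.ne']
  simp only [Fc, Gv', gradDot, gradSq, pdR, pdZ,
    fderiv_fun_mul_apply hy1 (hXinv.differentiableAt two_ne_zero),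
    fderiv_fun_inv_apply hX1 hX0, fderiv_fun_inv_apply hX2 (pow_ne_zero 2 hX0),
    fderiv_fun_sq_apply hX1]
  field_simp
  ring
end
end
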